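/- arXiv:2304.14101 — 2 statements merged into one kernel-verified Lean document; each statement's English description precedes it below -/
import Mathlib

section
/- Let G be a locally compact Hausdorff group acting continuously, properly, isometrically and transitively on a proper metric space (M,d) with base point * and isotropy group K. If a pair (H₁,H₂) of non-empty subsets of G is proper in G, then the pair (S^{H₁}(*), S^{H₂}(*)) is HBI in M, i.e., S^{H₁}(*) ∩ N̄_r(S^{H₂}(*)) is bounded for every r ≥ 0. -/
/-!
Let `D = {g | d(g•*, *) ≤ r}`; properness of the action makes `D` compact, and `D` contains the
isotropy group `K` and `1`. If `g₁ ∈ K H₁` and `g₂ ∈ K H₂` with `d(g₁•*, g₂•*) ≤ r`, then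
`g₁ = g₁ · 1⁻¹ ∈ D H₁ D⁻¹` and, by invariance of the metric, `g₁ = g₂ (g₁⁻¹ g₂)⁻¹ ∈ D H₂ D⁻¹`.
So `S^{H₁}(*) ∩ N̄_r(S^{H₂}(*))` lies in the orbit of `*` under the relatively compact set
`D H₁ D⁻¹ ∩ D H₂ D⁻¹`, which is bounded.
-/

open scoped Pointwise

/-- The closed `r`-neighborhood of a subset `C` of a metric space. -/
def closedNbhd {M : Type*} [MetricSpace M] (C : Set M) (r : ℝ) : Set M :=
  {p | ∃ c ∈ C, dist p c ≤ r}

/-- A pair `(H₁, H₂)` of subsets of a topological group is proper in `G`. -/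
def IsProperPair {G : Type*} [Group G] [TopologicalSpace G] (H₁ H₂ : Set G) : Prop :=
  ∀ D₁ D₂ : Set G, IsCompact D₁ → IsCompact D₂ →
    IsCompact (closure ((D₁ * H₁ * D₁⁻¹) ∩ (D₂ * H₂ * D₂⁻¹)))

open Set Metric

theorem Set.mul_subset_mul_mul_inv {G : Type*} [Group G] {K D H : Set G}
    (hKD : K ⊆ D) (hD : (1 : G) ∈ D) : K * H ⊆ D * H * D⁻¹ :=
  calc K * H = K * H * 1 := (mul_one _).symm
    _ ⊆ D * H * D⁻¹ :=
      mul_subset_mul (mul_subset_mul_right hKD) (one_subset.2 (by simpa using hD))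

section IsometricAction

variable {G M : Type*} [Group G] [MetricSpace M] [MulAction G M]

theorem dist_inv_mul_smul {g₁ : G} (hg₁ : Isometry fun x : M => g₁ • x) (g₂ : G) (x : M) :
    dist ((g₁⁻¹ * g₂) • x) x = dist (g₂ • x) (g₁ • x) := by
  rw [← hg₁.dist_eq, smul_smul, mul_inv_cancel_left]

theorem setOf_smul_eq_subset_preimage_closedBall {x : M} {r : ℝ} (hr : 0 ≤ r) :
    {k : G | k • x = x} ⊆ (· • x) ⁻¹' closedBall x r := fun k (hk : k • x = x) => by
  simpa [hk] using hr

theorem isCompact_preimage_closedBall [TopologicalSpace G] [ProperSpace M] (x : M) (r : ℝ)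
    (horb : Continuous fun g : G => g • x)
    (hproper : ∀ D : Set M, IsCompact D →
      IsCompact {g : G | ((fun y : M => g • y) '' D ∩ D).Nonempty}) :
    IsCompact ((fun g : G => g • x) ⁻¹' closedBall x r) := by
  refine (hproper _ (isCompact_closedBall x r)).of_isClosed_subset
    (isClosed_closedBall.preimage horb) fun g hg => ?_
  exact ⟨g • x, mem_image_of_mem _ (mem_closedBall_self (dist_nonneg.trans hg)), hg⟩

theorem image_inter_closedNbhd_subset (hisom : ∀ g : G, Isometry fun x : M => g • x)
    (x : M) (H₁ H₂ : Set G) {r : ℝ} (hr : 0 ≤ r) :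
    ((fun g : G => g • x) '' ({k : G | k • x = x} * H₁)) ∩
        closedNbhd ((fun g : G => g • x) '' ({k : G | k • x = x} * H₂)) r ⊆
      (fun g : G => g • x) ''
        ((((· • x) ⁻¹' closedBall x r) * H₁ * ((· • x) ⁻¹' closedBall x r)⁻¹) ∩
          (((· • x) ⁻¹' closedBall x r) * H₂ * ((· • x) ⁻¹' closedBall x r)⁻¹)) := by
  set D : Set G := (· • x) ⁻¹' closedBall x r
  have hKD : {k : G | k • x = x} ⊆ D := setOf_smul_eq_subset_preimage_closedBall hr
  have hD : (1 : G) ∈ D := hKD (one_smul G x)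
  rintro _ ⟨⟨g₁, hg₁, rfl⟩, _, ⟨g₂, hg₂, rfl⟩, hdist⟩
  refine ⟨g₁, ⟨Set.mul_subset_mul_mul_inv hKD hD hg₁, ?_⟩, rfl⟩
  have hdisp : g₁⁻¹ * g₂ ∈ D := by
    rw [mem_preimage, mem_closedBall, dist_inv_mul_smul (hisom g₁), dist_comm]
    exact hdist
  have hg₂' : g₂ ∈ D * H₂ := mul_subset_mul_right hKD hg₂
  simpa using mul_mem_mul hg₂' (inv_mem_inv.2 hdisp)

end IsometricAction

theorem HBI_SH_of_properPair_general
    {G : Type*} [Group G] [TopologicalSpace G]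
    {M : Type*} [MetricSpace M] [ProperSpace M] [MulAction G M]
    (hcont : Continuous fun p : G × M => p.1 • p.2)
    (hisom : ∀ g : G, Isometry fun x : M => g • x)
    (hproper : ∀ D : Set M, IsCompact D →
      IsCompact {g : G | ((fun x : M => g • x) '' D ∩ D).Nonempty})
    (star : M) (H₁ H₂ : Set G)
    (hpair : IsProperPair H₁ H₂) :
    ∀ r ≥ (0 : ℝ), Bornology.IsBounded
      (((fun g : G => g • star) '' ({k : G | k • star = star} * H₁)) ∩
        closedNbhd ((fun g : G => g • star) '' ({k : G | k • star = star} * H₂)) r) := by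
  intro r hr
  have horb : Continuous fun g : G => g • star := hcont.comp (continuous_id.prodMk continuous_const)
  have hD := isCompact_preimage_closedBall star r horb hproper
  exact ((hpair _ _ hD hD).image horb).isBounded.subset
    ((image_inter_closedNbhd_subset hisom star H₁ H₂ hr).trans (image_mono subset_closure))

theorem HBI_SH_of_properPair
    {G : Type*} [Group G] [TopologicalSpace G] [IsTopologicalGroup G]
    [LocallyCompactSpace G] [T2Space G]
    {M : Type*} [MetricSpace M] [ProperSpace M] [MulAction G M]
    (hcont : Continuous fun p : G × M => p.1 • p.2)
    (hisom : ∀ g : G, Isometry fun x : M => g • x)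
    (hproper : ∀ D : Set M, IsCompact D →
      IsCompact {g : G | ((fun x : M => g • x) '' D ∩ D).Nonempty})
    (htrans : ∀ x y : M, ∃ g : G, g • x = y)
    (star : M) (H₁ H₂ : Set G) (h₁ : H₁.Nonempty) (h₂ : H₂.Nonempty)
    (hpair : IsProperPair H₁ H₂) :
    ∀ r ≥ (0 : ℝ), Bornology.IsBounded
      (((fun g : G => g • star) '' ({k : G | k • star = star} * H₁)) ∩
        closedNbhd ((fun g : G => g • star) '' ({k : G | k • star = star} * H₂)) r) :=
  HBI_SH_of_properPair_general hcont hisom hproper star H₁ H₂ hpair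
end

section
/- Let G be a locally compact Hausdorff group acting continuously, properly, isometrically and transitively on a proper metric space (M,d) with Property (S), with base point *, isotropy group K at *, and orbit map μ : G → K\M, g ↦ K·(g·*), where K\M carries the orbit metric d^K. Then for non-empty subsets H₁, H₂ of G, the pair (H₁,H₂) is proper in G if and only if for every r ≥ 0 the intersection μ(H₁) ∩ N̄_r(μ(H₂)) is bounded in (K\M, d^K). -/
open scoped Pointwise

/-- The `K`-orbit of a point, for `K` a subset of a group acting on `M`. -/
def subOrbit {G : Type*} [Group G] {M : Type*} [MulAction G M]
    (K : Set G) (x : M) : Set M :=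
  {y : M | ∃ k ∈ K, k • x = y}

/-- The orbit distance `d^K` on the orbit space `K\M`, expressed on representatives:
`d^K(K·x, K·y) = inf {d(x', y') : x' ∈ K·x, y' ∈ K·y}`. -/
noncomputable def orbitDistOf {G : Type*} [Group G] {M : Type*} [MetricSpace M]
    [MulAction G M] (K : Set G) (x y : M) : ℝ :=
  sInf (Set.image2 dist (subOrbit K x) (subOrbit K y))

/-!
Write `E_ρ = {g | d(g•*, *) ≤ ρ}`; properness of the action makes `E_ρ` compact, and isometry
makes it symmetric. Since `K` fixes `*`, a family of `K`-orbits is bounded in `K\M` iff the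
representatives stay in a ball around `*`.

If `d^K(μ h, μ b) < t` then `h ∈ K b E_t ⊆ E_t b E_t⁻¹`, so properness of the pair (with
`D₁ = {1}`, `D₂ = E_t`) confines `μ(H₁) ∩ N̄_r(μ(H₂))` to the image of a compact set.
Conversely, if `d₁ h e₁ = d₂ b e₂` with `dᵢ, eᵢ⁻¹ ∈ Dᵢ`, then `h = (d₁⁻¹ d₂) b (e₂ e₁⁻¹)` where both
outer factors move `*` by at most `2c`, `c` bounding the displacement on `D₁ ∪ D₂`. Property (S)
turns `d₁⁻¹ d₂` into an element of `K` at the cost `τ(2c)`, so `d^K(μ h, μ b) ≤ 2c + τ(2c)`; hence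
`h • *` stays in a fixed ball and the intersection lies in some compact `E_ρ`.
-/

open Metric Bornology MulAction

section OrbitDist

variable {G : Type*} [Group G] {M : Type*} [MulAction G M]

lemma orbitDistOf_le_dist_of_mem [MetricSpace M] (K : Set G) {x y x' y' : M}
    (hx : x' ∈ subOrbit K x) (hy : y' ∈ subOrbit K y) :
    orbitDistOf K x y ≤ dist x' y' :=
  csInf_le ⟨0, by rintro _ ⟨_, -, _, -, rfl⟩; exact dist_nonneg⟩ (Set.mem_image2_of_mem hx hy)

lemma smul_mem_subOrbit {K : Set G} {k : G} (hk : k ∈ K) (x : M) : k • x ∈ subOrbit K x :=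
  ⟨k, hk, rfl⟩

lemma mem_subOrbit_self (S : Subgroup G) (x : M) : x ∈ subOrbit (S : Set G) x :=
  ⟨1, S.one_mem, one_smul G x⟩

variable [MetricSpace M]

lemma orbitDistOf_le_dist (S : Subgroup G) (x y : M) : orbitDistOf (S : Set G) x y ≤ dist x y :=
  orbitDistOf_le_dist_of_mem _ (mem_subOrbit_self S x) (mem_subOrbit_self S y)

variable [IsIsometricSMul G M]

lemma exists_dist_smul_lt_of_orbitDistOf_lt (S : Subgroup G) {x y : M} {t : ℝ}
    (h : orbitDistOf (S : Set G) x y < t) : ∃ k ∈ S, dist x (k • y) < t := by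
  obtain ⟨_, ⟨_, ⟨k, hk, rfl⟩, _, ⟨k', hk', rfl⟩, rfl⟩, hlt⟩ := exists_lt_of_csInf_lt
    ⟨_, Set.mem_image2_of_mem (mem_subOrbit_self S x) (mem_subOrbit_self S y)⟩ h
  refine ⟨k⁻¹ * k', S.mul_mem (S.inv_mem hk) hk', ?_⟩
  rwa [← dist_smul k, smul_smul, mul_inv_cancel_left]

lemma dist_sub_dist_le_orbitDistOf_stabilizer (a x y : M) :
    dist x a - dist y a ≤ orbitDistOf (stabilizer G a : Set G) x y := by
  refine le_csInf ⟨_, Set.mem_image2_of_mem (mem_subOrbit_self _ x) (mem_subOrbit_self _ y)⟩ ?_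
  rintro _ ⟨_, ⟨k, hk, rfl⟩, _, ⟨k', hk', rfl⟩, rfl⟩
  have hx : dist (k • x) a = dist x a := by rw [← dist_smul k x a, mem_stabilizer_iff.1 hk]
  have hy : dist (k' • y) a = dist y a := by rw [← dist_smul k' y a, mem_stabilizer_iff.1 hk']
  linarith [dist_triangle (k • x) (k' • y) a]

lemma isBounded_iff_orbitDistOf_stabilizer_le (a : M) (A : Set M) :
    IsBounded A ↔ ∃ R, ∀ x ∈ A, ∀ y ∈ A, orbitDistOf (stabilizer G a : Set G) x y ≤ R := by
  refine ⟨fun hA => ?_, fun ⟨R, hR⟩ => ?_⟩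
  · obtain ⟨C, hC⟩ := isBounded_iff.1 hA
    exact ⟨C, fun x hx y hy => (orbitDistOf_le_dist _ x y).trans (hC hx hy)⟩
  · rcases A.eq_empty_or_nonempty with rfl | ⟨x₀, hx₀⟩
    · exact isBounded_empty
    refine (isBounded_iff_subset_closedBall a).2 ⟨R + dist x₀ a, fun x hx => ?_⟩
    exact mem_closedBall.2 <| by
      linarith [hR x hx x₀ hx₀, dist_sub_dist_le_orbitDistOf_stabilizer (G := G) a x x₀]

end OrbitDist

section Proper

variable {G : Type*} [Group G] [TopologicalSpace G] {M : Type*} [MetricSpace M] [MulAction G M]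
  [ContinuousSMul G M]

lemma isClosed_setOf_dist_smul_le (a : M) (ρ : ℝ) : IsClosed {g : G | dist (g • a) a ≤ ρ} :=
  isClosed_le (by fun_prop) continuous_const

lemma isCompact_setOf_dist_smul_le [ProperSpace M]
    (hproper : ∀ D : Set M, IsCompact D →
      IsCompact {g : G | ((fun x : M => g • x) '' D ∩ D).Nonempty}) (a : M) (ρ : ℝ) :
    IsCompact {g : G | dist (g • a) a ≤ ρ} :=
  (hproper _ (isCompact_closedBall a ρ)).of_isClosed_subset (isClosed_setOf_dist_smul_le a ρ)
    fun g hg => ⟨g • a, ⟨a, mem_closedBall_self (dist_nonneg.trans hg), rfl⟩, hg⟩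

end Proper

section Displacement

variable {G : Type*} [Group G] {M : Type*} [MetricSpace M] [MulAction G M] [IsIsometricSMul G M]

lemma dist_inv_smul_self (g : G) (x : M) : dist (g⁻¹ • x) x = dist (g • x) x := by
  rw [← dist_smul g, smul_inv_smul, dist_comm]

lemma dist_mul_smul_self_le (g h : G) (x : M) :
    dist ((g * h) • x) x ≤ dist (g • x) x + dist (h • x) x :=
  calc dist ((g * h) • x) x ≤ dist ((g * h) • x) (g • x) + dist (g • x) x := dist_triangle _ _ _
    _ = dist (g • x) x + dist (h • x) x := by rw [mul_smul, dist_smul, add_comm]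

lemma mem_mul_mul_inv_of_orbitDistOf_lt {a : M} {H : Set G} {h b : G} (hb : b ∈ H) {t : ℝ}
    (hlt : orbitDistOf (stabilizer G a : Set G) (h • a) (b • a) < t) :
    h ∈ {g : G | dist (g • a) a ≤ t} * H * {g : G | dist (g • a) a ≤ t}⁻¹ := by
  obtain ⟨k, hk, hkt⟩ := exists_dist_smul_lt_of_orbitDistOf_lt _ hlt
  have hka : k • a = a := hk
  have hkE : dist (k • a) a ≤ t := by rw [hka, dist_self]; exact dist_nonneg.trans hkt.le
  have heE : dist (((k * b)⁻¹ * h)⁻¹ • a) a ≤ t := by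
    rw [dist_inv_smul_self, ← dist_smul (k * b), smul_smul, mul_inv_cancel_left, mul_smul]
    exact hkt.le
  exact ⟨k * b, Set.mul_mem_mul hkE hb, (k * b)⁻¹ * h, heE, mul_inv_cancel_left _ _⟩

lemma orbitDistOf_stabilizer_mul_mul_le {a : M} {c c' τ : ℝ}
    (hS : ∀ p₀ p q : M, dist p p₀ ≤ c → ∃ g : G, g • p = p₀ ∧ dist q (g • q) ≤ τ)
    {u v : G} (hu : dist (u • a) a ≤ c) (hv : dist (v • a) a ≤ c') (b : G) :
    orbitDistOf (stabilizer G a : Set G) ((u * b * v) • a) (b • a) ≤ c' + τ := by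
  obtain ⟨g, hga, hgτ⟩ := hS a (u • a) ((u * b) • a) hu
  have hk : g * u ∈ stabilizer G a := by rw [mem_stabilizer_iff, mul_smul, hga]
  have hkb : (g * u) • b • a = g • (u * b) • a := by rw [smul_smul, smul_smul, mul_assoc]
  calc orbitDistOf (stabilizer G a : Set G) ((u * b * v) • a) (b • a)
      ≤ dist ((u * b * v) • a) ((g * u) • b • a) :=
        orbitDistOf_le_dist_of_mem _ (mem_subOrbit_self _ _) (smul_mem_subOrbit hk _)
    _ ≤ dist ((u * b * v) • a) ((u * b) • a) + dist ((u * b) • a) (g • (u * b) • a) := by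
        rw [hkb]; exact dist_triangle _ _ _
    _ ≤ c' + τ := by rw [mul_smul (u * b), dist_smul]; exact add_le_add hv hgτ

end Displacement

/-- `H₁ ∩ μ⁻¹(N̄_r(μ(H₂)))` for the orbit map `μ g = K·(g • a)`, `K` the stabilizer of `a`. -/
def orbitNbhdInter {G : Type*} [Group G] {M : Type*} [MetricSpace M] [MulAction G M]
    (a : M) (H₁ H₂ : Set G) (r : ℝ) : Set G :=
  {h ∈ H₁ | ∃ b ∈ H₂, orbitDistOf (stabilizer G a : Set G) (h • a) (b • a) ≤ r}

section ProperPair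

variable {G : Type*} [Group G] [TopologicalSpace G] {M : Type*} [MetricSpace M] [ProperSpace M]
  [MulAction G M] [IsIsometricSMul G M] [ContinuousSMul G M]
  (hproper : ∀ D : Set M, IsCompact D →
    IsCompact {g : G | ((fun x : M => g • x) '' D ∩ D).Nonempty})
  {H₁ H₂ : Set G}
include hproper

lemma IsProperPair.isBounded_image_orbitNbhdInter (hpp : IsProperPair H₁ H₂) (a : M) (r : ℝ) :
    IsBounded ((· • a) '' orbitNbhdInter a H₁ H₂ r) := by
  set E := {g : G | dist (g • a) a ≤ r + 1}
  have hsub : orbitNbhdInter a H₁ H₂ r ⊆ {1} * H₁ * {1}⁻¹ ∩ (E * H₂ * E⁻¹) :=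
    fun h ⟨hh, b, hb, hr⟩ => ⟨by simpa using hh,
      mem_mul_mul_inv_of_orbitDistOf_lt hb (hr.trans_lt (lt_add_one r))⟩
  have hL := hpp {1} E isCompact_singleton (isCompact_setOf_dist_smul_le hproper a (r + 1))
  exact (hL.image (f := (· • a)) (by fun_prop)).isBounded.subset
    (Set.image_mono (hsub.trans subset_closure))

lemma isProperPair_of_isBounded_image_orbitNbhdInter
    (hS : ∀ r ≥ (0 : ℝ), ∃ τ ≥ (0 : ℝ), ∀ p₀ p q : M, dist p p₀ ≤ r →
      ∃ g : G, g • p = p₀ ∧ dist q (g • q) ≤ τ)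
    (a : M) (hB : ∀ r ≥ (0 : ℝ), IsBounded ((· • a) '' orbitNbhdInter a H₁ H₂ r)) :
    IsProperPair H₁ H₂ := by
  intro D₁ D₂ hD₁ hD₂
  obtain ⟨c, hc0, hc⟩ :=
    ((hD₁.union hD₂).image (f := (· • a)) (by fun_prop)).isBounded.subset_closedBall_lt 0 a
  have hD : ∀ d ∈ D₁ ∪ D₂, dist (d • a) a ≤ c := fun d hd => hc ⟨d, hd, rfl⟩
  have hD' : ∀ d, d⁻¹ ∈ D₁ ∪ D₂ → dist (d • a) a ≤ c := fun d hd => by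
    simpa only [dist_inv_smul_self] using hD _ hd
  obtain ⟨τ, hτ0, hτ⟩ := hS (c + c) (by positivity)
  obtain ⟨R, hR⟩ := (hB (c + c + τ) (by positivity)).subset_closedBall a
  have hX : D₁ * H₁ * D₁⁻¹ ∩ (D₂ * H₂ * D₂⁻¹) ⊆ {g : G | dist (g • a) a ≤ c + R + c} := by
    rintro _ ⟨⟨_, ⟨d₁, hd₁, h, hh, rfl⟩, e₁, he₁, rfl⟩, ⟨_, ⟨d₂, hd₂, b, hb, rfl⟩, e₂, he₂, heq⟩⟩
    have hh_eq : h = d₁⁻¹ * d₂ * b * (e₂ * e₁⁻¹) :=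
      calc h = d₁⁻¹ * (d₁ * h * e₁) * e₁⁻¹ := by group
        _ = d₁⁻¹ * (d₂ * b * e₂) * e₁⁻¹ := congrArg (d₁⁻¹ * · * e₁⁻¹) heq.symm
        _ = d₁⁻¹ * d₂ * b * (e₂ * e₁⁻¹) := by group
    have hnear : h ∈ orbitNbhdInter a H₁ H₂ (c + c + τ) := by
      refine ⟨hh, b, hb, ?_⟩
      rw [hh_eq]
      refine orbitDistOf_stabilizer_mul_mul_le hτ ?_ ?_ b
      · exact (dist_mul_smul_self_le _ _ _).trans
          (add_le_add (hD' _ (by simpa using .inl hd₁)) (hD _ (.inr hd₂)))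
      · exact (dist_mul_smul_self_le _ _ _).trans
          (add_le_add (hD' _ (.inr he₂)) (hD _ (.inl he₁)))
    calc dist ((d₁ * h * e₁) • a) a ≤ dist (d₁ • a) a + dist (h • a) a + dist (e₁ • a) a :=
          by linarith [dist_mul_smul_self_le d₁ h a, dist_mul_smul_self_le (d₁ * h) e₁ a]
      _ ≤ c + R + c := by
          gcongr
          · exact hD _ (.inl hd₁)
          · exact mem_closedBall.1 (hR ⟨h, hnear, rfl⟩)
          · exact hD' _ (.inl he₁)
  exact (isCompact_setOf_dist_smul_le hproper a _).of_isClosed_subset isClosed_closure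
    (closure_minimal hX (isClosed_setOf_dist_smul_le a _))

end ProperPair

theorem properPair_iff_mu_HBI_general
    {G : Type*} [Group G] [TopologicalSpace G]
    {M : Type*} [MetricSpace M] [ProperSpace M] [MulAction G M]
    (hcont : Continuous fun p : G × M => p.1 • p.2)
    (hisom : ∀ g : G, Isometry fun x : M => g • x)
    (hproper : ∀ D : Set M, IsCompact D →
      IsCompact {g : G | ((fun x : M => g • x) '' D ∩ D).Nonempty})
    -- Property (S)
    (hS : ∀ r ≥ (0 : ℝ), ∃ τ ≥ (0 : ℝ), ∀ p₀ p q : M, dist p p₀ ≤ r →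
      ∃ g : G, g • p = p₀ ∧ dist q (g • q) ≤ τ)
    (star : M) (H₁ H₂ : Set G) (h₂ : H₂.Nonempty) :
    IsProperPair H₁ H₂ ↔
      -- for every `r ≥ 0`, `μ(H₁) ∩ N̄_r(μ(H₂))` is bounded in `(K\M, d^K)`,
      -- where `K = {g : g • * = *}` and `μ(g) = K·(g • *)`
      ∀ r ≥ (0 : ℝ), ∃ R : ℝ, ∀ h ∈ H₁, ∀ h' ∈ H₁,
        (∃ h₂ ∈ H₂, orbitDistOf {k : G | k • star = star} (h • star) (h₂ • star) ≤ r) →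
        (∃ h₂ ∈ H₂, orbitDistOf {k : G | k • star = star} (h' • star) (h₂ • star) ≤ r) →
        orbitDistOf {k : G | k • star = star} (h • star) (h' • star) ≤ R := by
  have : IsIsometricSMul G M := ⟨hisom⟩
  have : ContinuousSMul G M := ⟨hcont⟩
  have hbdd : ∀ r, IsBounded ((· • star) '' orbitNbhdInter star H₁ H₂ r) ↔
      ∃ R : ℝ, ∀ h ∈ H₁, ∀ h' ∈ H₁,
        (∃ h₂ ∈ H₂, orbitDistOf {k : G | k • star = star} (h • star) (h₂ • star) ≤ r) →
        (∃ h₂ ∈ H₂, orbitDistOf {k : G | k • star = star} (h' • star) (h₂ • star) ≤ r) →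
        orbitDistOf {k : G | k • star = star} (h • star) (h' • star) ≤ R := fun r => by
    rw [isBounded_iff_orbitDistOf_stabilizer_le (G := G) star]
    simp only [Set.forall_mem_image]
    exact exists_congr fun R =>
      ⟨fun hR h hh h' hh' hr hr' => hR ⟨hh, hr⟩ ⟨hh', hr'⟩,
        fun hR h ⟨hh, hr⟩ h' ⟨hh', hr'⟩ => hR h hh h' hh' hr hr'⟩
  exact ⟨fun hpp r _ => (hbdd r).1 (hpp.isBounded_image_orbitNbhdInter hproper star r),
    fun hB => isProperPair_of_isBounded_image_orbitNbhdInter hproper hS star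
      fun r hr => (hbdd r).2 (hB r hr)⟩

theorem properPair_iff_mu_HBI
    {G : Type*} [Group G] [TopologicalSpace G] [IsTopologicalGroup G]
    [LocallyCompactSpace G] [T2Space G]
    {M : Type*} [MetricSpace M] [ProperSpace M] [MulAction G M]
    (hcont : Continuous fun p : G × M => p.1 • p.2)
    (hisom : ∀ g : G, Isometry fun x : M => g • x)
    (hproper : ∀ D : Set M, IsCompact D →
      IsCompact {g : G | ((fun x : M => g • x) '' D ∩ D).Nonempty})
    (htrans : ∀ x y : M, ∃ g : G, g • x = y)
    -- Property (S)
    (hS : ∀ r ≥ (0 : ℝ), ∃ τ ≥ (0 : ℝ), ∀ p₀ p q : M, dist p p₀ ≤ r →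
      ∃ g : G, g • p = p₀ ∧ dist q (g • q) ≤ τ)
    (star : M) (H₁ H₂ : Set G) (h₁ : H₁.Nonempty) (h₂ : H₂.Nonempty) :
    IsProperPair H₁ H₂ ↔
      -- for every `r ≥ 0`, `μ(H₁) ∩ N̄_r(μ(H₂))` is bounded in `(K\M, d^K)`,
      -- where `K = {g : g • * = *}` and `μ(g) = K·(g • *)`
      ∀ r ≥ (0 : ℝ), ∃ R : ℝ, ∀ h ∈ H₁, ∀ h' ∈ H₁,
        (∃ h₂ ∈ H₂, orbitDistOf {k : G | k • star = star} (h • star) (h₂ • star) ≤ r) →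
        (∃ h₂ ∈ H₂, orbitDistOf {k : G | k • star = star} (h' • star) (h₂ • star) ≤ r) →
        orbitDistOf {k : G | k • star = star} (h • star) (h' • star) ≤ R :=
  properPair_iff_mu_HBI_general hcont hisom hproper hS star H₁ H₂ h₂
end
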